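/- arXiv:math/0407200 — 4 statements merged into one kernel-verified Lean document; each statement's English description precedes it below -/
import Mathlib

section
/- A countably-normed space V with increasing norms is complete if and only if V equals the intersection ⋂_{n=1}^∞ V_n of the completions V_n of V in the norms ‖·‖_n. -/
open Filter

/-- Composite inclusion `W (n+m) → W n`. -/
def chainIncl {W : ℕ → Type*} [∀ n, NormedAddCommGroup (W n)] [∀ n, NormedSpace ℝ (W n)]
    (incl : ∀ n, W (n + 1) →L[ℝ] W n) (n : ℕ) : ∀ m, W (n + m) →L[ℝ] W n
  | 0 => ContinuousLinearMap.id ℝ (W n)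
  | (m + 1) => (chainIncl incl n m).comp (incl (n + m))

/-- A countably-normed space `V` with increasing norms `p n` and completions `W n`
(with dense isometric embeddings `j n` and inclusion maps `ι n : W (n+1) → W n`,
composites `c n : W n → W 0` identifying every `W n` with a subset of `W 0`) is complete
(every sequence Cauchy in all norms converges in all norms to an element of `V`)
iff `V = ⋂ n, V_n`, i.e. the intersection of the ranges of the `c n` in `W 0` is
exactly the copy of `V`. -/
theorem stmt4 {V : Type*} [AddCommGroup V] [Module ℝ V]
    (p : SeminormFamily ℝ V ℕ) (hmono : Monotone p)
    (W : ℕ → Type*) [∀ n, NormedAddCommGroup (W n)] [∀ n, NormedSpace ℝ (W n)]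
    [∀ n, CompleteSpace (W n)]
    (j : ∀ n, V →ₗ[ℝ] W n) (hj : ∀ n v, ‖j n v‖ = p n v)
    (hdense : ∀ n, DenseRange (j n))
    (incl : ∀ n, W (n + 1) →L[ℝ] W n) (hincl : ∀ n v, incl n (j (n + 1) v) = j n v)
    (c : ∀ n, W n →L[ℝ] W 0) (hc0 : ∀ x, c 0 x = x)
    (hcs : ∀ n x, c (n + 1) x = c n (incl n x))
    (hcinj : ∀ n, Function.Injective (c n)) :
    (∀ u : ℕ → V, (∀ n, CauchySeq (fun k => j n (u k))) →
        ∃ v : V, ∀ n, Tendsto (fun k => j n (u k)) atTop (nhds (j n v)))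
      ↔ (⋂ n, Set.range (c n)) = Set.range (j 0) := by
  -- `incl` is norm-nonincreasing
  have hincl_norm : ∀ n (y : W (n + 1)), ‖incl n y‖ ≤ ‖y‖ := by
    intro n
    have hS : IsClosed {y : W (n + 1) | ‖incl n y‖ ≤ ‖y‖} :=
      isClosed_le (continuous_norm.comp (incl n).continuous) continuous_norm
    have hsub : Set.range (j (n + 1)) ⊆ {y : W (n + 1) | ‖incl n y‖ ≤ ‖y‖} := by
      rintro _ ⟨v, rfl⟩
      simp only [Set.mem_setOf_eq, hincl n v, hj]
      exact hmono (Nat.le_succ n) v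
    have := closure_minimal hsub hS
    rw [(hdense (n + 1)).closure_range] at this
    intro y; exact this (Set.mem_univ y)
  -- chainIncl maps j (n+m) v to j n v
  have hchain_j : ∀ n m (v : V), chainIncl incl n m (j (n + m) v) = j n v := by
    intro n m
    induction m with
    | zero => intro v; rfl
    | succ m ih =>
      intro v
      show chainIncl incl n m (incl (n + m) (j (n + m + 1) v)) = j n v
      rw [hincl (n + m) v, ih v]
  -- chainIncl is norm-nonincreasing
  have hchain_norm : ∀ n m (x : W (n + m)), ‖chainIncl incl n m x‖ ≤ ‖x‖ := by
    intro n m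
    induction m with
    | zero => intro x; exact le_rfl
    | succ m ih =>
      intro x
      calc ‖chainIncl incl n m (incl (n + m) x)‖ ≤ ‖incl (n + m) x‖ := ih _
        _ ≤ ‖x‖ := hincl_norm (n + m) x
  -- c (n+m) = c n ∘ chainIncl
  have hchain_c : ∀ n m (x : W (n + m)), c (n + m) x = c n (chainIncl incl n m x) := by
    intro n m
    induction m with
    | zero => intro x; rfl
    | succ m ih =>
      intro x
      show c (n + m + 1) x = c n (chainIncl incl n (m + 1) x)
      rw [hcs (n + m) x, ih (incl (n + m) x)]
      rfl
  -- c n (j n v) = j 0 v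
  have hcj : ∀ n (v : V), c n (j n v) = j 0 v := by
    intro n
    induction n with
    | zero => intro v; exact hc0 _
    | succ n ih => intro v; rw [hcs n, hincl n v, ih v]
  have hrange_sub : Set.range (j 0) ⊆ ⋂ n, Set.range (c n) := by
    rintro _ ⟨v, rfl⟩
    exact Set.mem_iInter.2 fun n => ⟨j n v, hcj n v⟩
  constructor
  · -- completeness → intersection = range j 0
    intro hcomp
    refine le_antisymm ?_ hrange_sub
    intro x hx
    rw [Set.mem_iInter] at hx
    choose w hw using hx
    -- compatibility of the w n
    have hwc : ∀ n m, chainIncl incl n m (w (n + m)) = w n := by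
      intro n m
      apply hcinj n
      rw [← hchain_c n m (w (n + m)), hw (n + m), hw n]
    -- choose approximating sequence
    have hchoose : ∀ k : ℕ, ∃ v : V, dist (w k) (j k v) < 1 / (k + 1) := by
      intro k
      exact Metric.denseRange_iff.1 (hdense k) (w k) (1 / (k + 1)) (by positivity)
    choose u hu using hchoose
    -- j n (u k) → w n for each n
    have htend : ∀ n, Tendsto (fun k => j n (u k)) atTop (nhds (w n)) := by
      intro n
      have key : Tendsto (fun m => j n (u (n + m))) atTop (nhds (w n)) := by
        rw [tendsto_iff_norm_sub_tendsto_zero]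
        apply squeeze_zero (fun m => norm_nonneg _) (g := fun m : ℕ => 1 / (m + 1 : ℝ))
        · intro m
          have h1 : j n (u (n + m)) - w n
              = chainIncl incl n m (j (n + m) (u (n + m)) - w (n + m)) := by
            rw [map_sub, hchain_j, hwc]
          rw [h1]
          calc ‖chainIncl incl n m (j (n + m) (u (n + m)) - w (n + m))‖
              ≤ ‖j (n + m) (u (n + m)) - w (n + m)‖ := hchain_norm _ _ _
            _ = dist (w (n + m)) (j (n + m) (u (n + m))) := by
                rw [dist_eq_norm, norm_sub_rev]
            _ ≤ 1 / ((n + m : ℕ) + 1) := (hu (n + m)).le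
            _ ≤ 1 / (m + 1) := by
                apply one_div_le_one_div_of_le (by positivity)
                push_cast; linarith [Nat.cast_nonneg (α := ℝ) n]
        · exact tendsto_one_div_add_atTop_nhds_zero_nat
      have heq : (fun m => j n (u (m + n))) = fun m => j n (u (n + m)) := by
        funext m; rw [Nat.add_comm]
      rw [← tendsto_add_atTop_iff_nat (f := fun k => j n (u k)) (l := nhds (w n)) n, heq]
      exact key
    obtain ⟨v, hv⟩ := hcomp u (fun n => (htend n).cauchySeq)
    have hwv : w 0 = j 0 v := tendsto_nhds_unique (htend 0) (hv 0)
    refine ⟨v, ?_⟩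
    rw [← hwv, ← hw 0, hc0]
  · -- intersection = range j 0 → completeness
    intro hinter u hu
    have hx : ∀ n, ∃ x : W n, Tendsto (fun k => j n (u k)) atTop (nhds x) :=
      fun n => cauchySeq_tendsto_of_complete (hu n)
    choose x hxt using hx
    have hcompat : ∀ n, incl n (x (n + 1)) = x n := by
      intro n
      have h1 : Tendsto (fun k => incl n (j (n + 1) (u k))) atTop (nhds (incl n (x (n + 1)))) :=
        ((incl n).continuous.tendsto _).comp (hxt (n + 1))
      have h2 : (fun k => incl n (j (n + 1) (u k))) = fun k => j n (u k) := by
        funext k; exact hincl n (u k)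
      rw [h2] at h1
      exact tendsto_nhds_unique h1 (hxt n)
    have hcx : ∀ n, c n (x n) = x 0 := by
      intro n
      induction n with
      | zero => exact hc0 _
      | succ n ih => rw [hcs n, hcompat n, ih]
    have hx0 : x 0 ∈ ⋂ n, Set.range (c n) :=
      Set.mem_iInter.2 fun n => ⟨x n, hcx n⟩
    rw [hinter] at hx0
    obtain ⟨v, hv⟩ := hx0
    refine ⟨v, fun n => ?_⟩
    have : x n = j n v := by
      apply hcinj n
      rw [hcx n, hcj n v, hv]
    rw [← this]
    exact hxt n
end

section
/- A subset B of the dual V' of a countably-normed space V is strongly bounded if and only if there exists k such that B ⊆ V_k' and B is bounded in the operator norm ‖·‖_{-k} of V_k'. -/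
open scoped Pointwise

/-!
If no `|f v| ≤ C ‖v‖_k` bound holds uniformly on `B`, pick for every `k` some `f_k ∈ B` and
`w_k` with `‖w_k‖_k ≤ 1` and `|f_k(w_k)| = k`. Since the norms increase, `‖w_k‖_i ≤ 1` for all
`k ≥ i`, so `{w_k}` is bounded in `V`; but `B` is then not absorbed by the polar of `{w_k}`.
Conversely, a bound `|f v| ≤ C ‖v‖_k` makes `B` uniformly bounded on every bounded set.
-/

open Bornology Filter Set

theorem exists_seminorm_le_one_abs_eq {E : Type*} [AddCommGroup E] [Module ℝ E]
    (q : Seminorm ℝ E) (f : E →ₗ[ℝ] ℝ) {c : ℝ} (hc : 0 ≤ c) {v : E} (h : c * q v < |f v|) :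
    ∃ w, q w ≤ 1 ∧ |f w| = c := by
  have hfv : 0 < |f v| := (mul_nonneg hc (apply_nonneg q v)).trans_lt h
  refine ⟨(c / |f v|) • v, ?_, ?_⟩
  · rw [map_smul_eq_mul, Real.norm_eq_abs, abs_of_nonneg (by positivity), div_mul_eq_mul_div,
      div_le_one hfv]
    exact h.le
  · rw [map_smul, smul_eq_mul, abs_mul, abs_of_nonneg (by positivity), div_mul_cancel₀ _ hfv.ne']

section

variable {V : Type*} [AddCommGroup V] [Module ℝ V] [TopologicalSpace V]

/-- `B` is absorbed by every basic neighbourhood `{f | sup_D |f| < ε}` of zero of the strong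
topology on `V'`. -/
def IsStronglyBounded (B : Set (V →L[ℝ] ℝ)) : Prop :=
  ∀ D : Set V, IsVonNBounded ℝ D → ∀ ε > (0 : ℝ),
    ∃ lam > (0 : ℝ), B ⊆ lam • {f : V →L[ℝ] ℝ | ∀ v ∈ D, |f v| < ε}

theorem exists_subset_smul_setOf_abs_lt {B : Set (V →L[ℝ] ℝ)} {D : Set V} {R : ℝ}
    (hR : ∀ f ∈ B, ∀ v ∈ D, |f v| ≤ R) {ε : ℝ} (hε : 0 < ε) :
    ∃ lam > (0 : ℝ), B ⊆ lam • {f : V →L[ℝ] ℝ | ∀ v ∈ D, |f v| < ε} := by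
  set lam := (max R 0 + ε) / ε
  have hlam : 0 < lam := by positivity
  have hlamε : lam * ε = max R 0 + ε := div_mul_cancel₀ _ hε.ne'
  refine ⟨lam, hlam, fun f hf => ⟨lam⁻¹ • f, fun v hv => ?_, smul_inv_smul₀ hlam.ne' f⟩⟩
  have hfv : |f v| < lam * ε := by linarith [hR f hf v hv, le_max_left R 0]
  rw [smul_apply, smul_eq_mul, abs_mul, abs_inv, abs_of_pos hlam,
    inv_mul_lt_iff₀ hlam]
  exact hfv

variable {p : SeminormFamily ℝ V ℕ}

theorem isStronglyBounded_of_abs_le (hp : WithSeminorms p) {B : Set (V →L[ℝ] ℝ)} {k : ℕ} {C : ℝ}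
    (hC : ∀ f ∈ B, ∀ v : V, |f v| ≤ C * p k v) : IsStronglyBounded B := by
  intro D hD ε hε
  obtain ⟨M, -, hM⟩ := hp.isVonNBounded_iff_seminorm_bounded.mp hD k
  refine exists_subset_smul_setOf_abs_lt (R := max C 0 * M) (fun f hf v hv => ?_) hε
  calc |f v| ≤ C * p k v := hC f hf v
    _ ≤ max C 0 * p k v := mul_le_mul_of_nonneg_right (le_max_left C 0) (apply_nonneg _ v)
    _ ≤ max C 0 * M := mul_le_mul_of_nonneg_left (hM v hv).le (le_max_right C 0)

theorem isVonNBounded_range_of_seminorm_le_one (hp : WithSeminorms p) (hmono : Monotone p)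
    {w : ℕ → V} (hw : ∀ k, p k (w k) ≤ 1) : IsVonNBounded ℝ (range w) := by
  refine hp.isVonNBounded_iff_seminorm_bddAbove.mpr fun i => ?_
  rw [← range_comp]
  refine (isBoundedUnder_of_eventually_le (a := 1) ?_).bddAbove_range
  filter_upwards [eventually_ge_atTop i] with k hik
  exact (hmono hik (w k)).trans (hw k)

theorem IsStronglyBounded.exists_abs_le (hp : WithSeminorms p) (hmono : Monotone p)
    {B : Set (V →L[ℝ] ℝ)} (hB : IsStronglyBounded B) :
    ∃ (k : ℕ) (C : ℝ), ∀ f ∈ B, ∀ v : V, |f v| ≤ C * p k v := by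
  by_contra! hno
  choose f hfB v hv using fun k : ℕ => hno k k
  choose w hw hfw using fun k =>
    exists_seminorm_le_one_abs_eq (p k) (f k).toLinearMap k.cast_nonneg (hv k)
  obtain ⟨lam, hlam, hsub⟩ := hB _ (isVonNBounded_range_of_seminorm_le_one hp hmono hw) 1 one_pos
  obtain ⟨k, hk⟩ := exists_nat_gt lam
  obtain ⟨g, hg, hgf⟩ := hsub (hfB k)
  have hgw : |g (w k)| < 1 := hg (w k) ⟨k, rfl⟩
  have : (k : ℝ) < k := calc
    (k : ℝ) = lam * |g (w k)| := by
      rw [← hfw k, ContinuousLinearMap.coe_coe, ← hgf, smul_apply,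
        smul_eq_mul, abs_mul, abs_of_pos hlam]
    _ < lam := mul_lt_of_lt_one_right hlam hgw
    _ < k := hk
  exact this.false

end

/-- A set `B` in the dual `V'` of a countably-normed space is strongly bounded iff there is
a `k` such that `B ⊆ V_k'` and `B` is bounded in the operator norm of `V_k'` — i.e. iff
there are `k` and `C` with `|⟨f, v⟩| ≤ C ‖v‖_k` for all `f ∈ B`, `v ∈ V`. -/
theorem stmt15 {V : Type*} [AddCommGroup V] [Module ℝ V] [TopologicalSpace V]
    (p : SeminormFamily ℝ V ℕ) (hp : WithSeminorms p) (hmono : Monotone p)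
    (B : Set (V →L[ℝ] ℝ)) :
    (∀ D : Set V, Bornology.IsVonNBounded ℝ D → ∀ ε > (0 : ℝ),
        ∃ lam > (0 : ℝ), B ⊆ lam • {f : V →L[ℝ] ℝ | ∀ v ∈ D, |f v| < ε}) ↔
      (∃ (k : ℕ) (C : ℝ), ∀ f ∈ B, ∀ v : V, |f v| ≤ C * p k v) :=
  ⟨IsStronglyBounded.exists_abs_le hp hmono, fun ⟨_, _, hC⟩ => isStronglyBounded_of_abs_le hp hC⟩
end

section
/- If V is a complete countably-normed space, then every weakly bounded subset of V' is strongly bounded. -/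
/-!
A complete space whose topology is given by countably many seminorms has a countably generated
uniformity, so it is completely pseudometrizable, hence a Baire space, hence barrelled.
By Banach–Steinhaus a weakly bounded set `B` of functionals is then equicontinuous: all
`f ∈ B` are bounded by `1` on a common neighbourhood `U` of `0`. A bounded set `D` lies in
some dilate `r • U`, so `B` is uniformly bounded by `r` on `D`, and therefore absorbed by the
strong neighbourhood `{f | ∀ v ∈ D, |f v| < ε}`.
-/

open scoped Pointwise Topology

theorem WithSeminorms.barrelledSpace_of_countable {𝕜 V ι : Type*} [NontriviallyNormedField 𝕜]
    [AddCommGroup V] [Module 𝕜 V] [UniformSpace V] [IsUniformAddGroup V] [CompleteSpace V]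
    [Countable ι] {p : SeminormFamily 𝕜 V ι} (hp : WithSeminorms p) : BarrelledSpace 𝕜 V := by
  have := hp.continuousSMul
  have := hp.firstCountableTopology
  have : (uniformity V).IsCountablyGenerated := IsUniformAddGroup.uniformity_countably_generated
  let _ : PseudoMetricSpace V := UniformSpace.pseudoMetricSpace V
  exact BaireSpace.instBarrelledSpace

theorem eventually_nhds_zero_forall_abs_lt_one_of_pointwise_bounded {V : Type*}
    [AddCommGroup V] [Module ℝ V] [UniformSpace V] [IsUniformAddGroup V] [ContinuousSMul ℝ V]
    [BarrelledSpace ℝ V] {B : Set (V →L[ℝ] ℝ)} (hweak : ∀ v : V, ∃ M : ℝ, ∀ f ∈ B, |f v| ≤ M) :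
    ∀ᶠ v in 𝓝 0, ∀ f ∈ B, |f v| < 1 := by
  have hequi : UniformEquicontinuous ((↑) ∘ (Subtype.val : B → V →L[ℝ] ℝ)) := by
    refine (norm_withSeminorms ℝ ℝ).banach_steinhaus fun _ v ↦ ?_
    obtain ⟨M, hM⟩ := hweak v
    exact ⟨M, by rintro _ ⟨f, rfl⟩; simpa [Real.norm_eq_abs] using hM f f.2⟩
  filter_upwards [hequi.equicontinuous 0 _ (Metric.dist_mem_uniformity one_pos)] with v hv f hf
  simpa [Real.dist_eq, abs_sub_comm] using hv ⟨f, hf⟩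

theorem exists_forall_abs_le_of_isVonNBounded {V : Type*} [AddCommGroup V] [Module ℝ V]
    [TopologicalSpace V] {B : Set (V →L[ℝ] ℝ)} (hB : ∀ᶠ v in 𝓝 0, ∀ f ∈ B, |f v| < 1)
    {D : Set V} (hD : Bornology.IsVonNBounded ℝ D) :
    ∃ r > 0, ∀ f ∈ B, ∀ v ∈ D, |f v| ≤ r := by
  obtain ⟨U, hU, hBU⟩ := hB.exists_mem
  obtain ⟨r, hr, hDU⟩ := (hD hU).exists_pos
  refine ⟨r, hr, fun f hf v hv ↦ ?_⟩
  obtain ⟨u, hu, rfl⟩ := hDU r (by rw [Real.norm_of_nonneg hr.le]) hv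
  calc |f (r • u)| = r * |f u| := by rw [map_smul, smul_eq_mul, abs_mul, abs_of_pos hr]
    _ ≤ r * 1 := by gcongr; exact (hBU u hu f hf).le
    _ = r := mul_one r

theorem exists_subset_smul_setOf_abs_lt_of_forall_abs_le {V : Type*} [AddCommGroup V]
    [Module ℝ V] [TopologicalSpace V] {B : Set (V →L[ℝ] ℝ)} {D : Set V} {r : ℝ} (hr : 0 ≤ r)
    (hBD : ∀ f ∈ B, ∀ v ∈ D, |f v| ≤ r) {ε : ℝ} (hε : 0 < ε) :
    ∃ lam > (0 : ℝ), B ⊆ lam • {f : V →L[ℝ] ℝ | ∀ v ∈ D, |f v| < ε} := by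
  have hlam : 0 < (r + 1) / ε := by positivity
  refine ⟨(r + 1) / ε, hlam, fun f hf ↦ ?_⟩
  rw [Set.mem_smul_set_iff_inv_smul_mem₀ hlam.ne']
  intro v hv
  calc |((r + 1) / ε)⁻¹ • f v| = ε / (r + 1) * |f v| := by
        rw [smul_eq_mul, abs_mul, inv_div, abs_of_pos (by positivity)]
    _ ≤ ε / (r + 1) * r := by gcongr; exact hBD f hf v hv
    _ < ε := by rw [div_mul_eq_mul_div, div_lt_iff₀ (by positivity)]; linarith

theorem stmt17_general {V : Type*} [AddCommGroup V] [Module ℝ V] [UniformSpace V]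
    [IsUniformAddGroup V] [CompleteSpace V]
    (p : SeminormFamily ℝ V ℕ) (hp : WithSeminorms p)
    (B : Set (V →L[ℝ] ℝ))
    (hweak : ∀ v : V, ∃ M : ℝ, ∀ f ∈ B, |f v| ≤ M) :
    ∀ D : Set V, Bornology.IsVonNBounded ℝ D → ∀ ε > (0 : ℝ),
      ∃ lam > (0 : ℝ), B ⊆ lam • {f : V →L[ℝ] ℝ | ∀ v ∈ D, |f v| < ε} := by
  intro D hD ε hε
  have := hp.continuousSMul
  have := hp.barrelledSpace_of_countable
  obtain ⟨r, hr, hBD⟩ := exists_forall_abs_le_of_isVonNBounded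
    (eventually_nhds_zero_forall_abs_lt_one_of_pointwise_bounded hweak) hD
  exact exists_subset_smul_setOf_abs_lt_of_forall_abs_le hr.le hBD hε

/-- If `V` is a complete countably-normed space, then every weakly bounded subset of `V'`
is strongly bounded. -/
theorem stmt17 {V : Type*} [AddCommGroup V] [Module ℝ V] [UniformSpace V]
    [IsUniformAddGroup V] [CompleteSpace V]
    (p : SeminormFamily ℝ V ℕ) (hp : WithSeminorms p) (hmono : Monotone p)
    (B : Set (V →L[ℝ] ℝ))
    (hweak : ∀ v : V, ∃ M : ℝ, ∀ f ∈ B, |f v| ≤ M) :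
    ∀ D : Set V, Bornology.IsVonNBounded ℝ D → ∀ ε > (0 : ℝ),
      ∃ lam > (0 : ℝ), B ⊆ lam • {f : V →L[ℝ] ℝ | ∀ v ∈ D, |f v| < ε} :=
  stmt17_general p hp B hweak
end

section
/- If V is a nuclear space (a complete countably-Hilbert space such that for every n there is m ≥ n with the inclusion V_m → V_n Hilbert–Schmidt), then every bounded subset of V is relatively compact (V is perfect). -/
/-!
Fix a basic neighbourhood `{p n < r}` and take `m ≥ n` with a `p m`-orthonormal total family `e`
such that `∑ₖ p n (e k)² < ∞`; let `F` be a finite set outside which this sum is below `ε²`, and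
`P_F v = ∑_{k ∈ F} B_m(v, e k) e k`. By Bessel's inequality and Cauchy–Schwarz,
`p n (v - P_F v) ≤ ε · p m v` for finite combinations `v` of the `e k`, and this extends to all `v`
by density because `v ↦ p n (v - P_F v)` is dominated by a multiple of `p m`. Hence a bounded set
`s` lies in `P_F '' s + {p n < r}`, and `P_F '' s` is a bounded set of coefficients in finitely
many directions, so `s` is totally bounded.
-/

open Topology
open scoped Pointwise

theorem Seminorm.apply_sum_smul_le {E ι : Type*} [AddCommGroup E] [Module ℝ E]
    (q : Seminorm ℝ E) (s : Finset ι) (a : ι → ℝ) (x : ι → E) :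
    q (∑ i ∈ s, a i • x i) ≤ √(∑ i ∈ s, a i ^ 2) * √(∑ i ∈ s, q (x i) ^ 2) :=
  calc q (∑ i ∈ s, a i • x i) ≤ ∑ i ∈ s, q (a i • x i) :=
        Finset.le_sum_of_subadditive q (map_zero q).le (map_add_le_add q) s _
    _ = ∑ i ∈ s, |a i| * q (x i) := by simp only [map_smul_eq_mul, Real.norm_eq_abs]
    _ ≤ √(∑ i ∈ s, |a i| ^ 2) * √(∑ i ∈ s, q (x i) ^ 2) := Real.sum_mul_le_sqrt_mul_sqrt _ _ _
    _ = √(∑ i ∈ s, a i ^ 2) * √(∑ i ∈ s, q (x i) ^ 2) := by simp only [sq_abs]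

theorem Seminorm.apply_le_mul_of_approx {E : Type*} [AddCommGroup E] [Module ℝ E]
    (r p : Seminorm ℝ E) {K c : ℝ} (hK₀ : 0 ≤ K) (hK : ∀ v, r v ≤ K * p v) (hc : 0 ≤ c)
    (happrox : ∀ v, ∀ δ > 0, ∃ w, p (v - w) < δ ∧ r w ≤ c * p w) (v : E) :
    r v ≤ c * p v := by
  refine le_of_forall_pos_lt_add fun η hη => ?_
  obtain ⟨w, hvw, hw⟩ := happrox v (η / (K + c + 1)) (by positivity)
  have hpw : p w ≤ p v + p (v - w) := by
    simpa using map_sub_le_add p v (v - w)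
  calc r v ≤ r (v - w) + r w := by simpa using map_add_le_add r (v - w) w
    _ ≤ K * p (v - w) + c * (p v + p (v - w)) := by gcongr; exacts [hK _, hw.trans (by gcongr)]
    _ = c * p v + (K + c) * p (v - w) := by ring
    _ ≤ c * p v + (K + c) * (η / (K + c + 1)) := by gcongr
    _ < c * p v + η := by
        gcongr
        rw [mul_div_assoc', div_lt_iff₀ (by positivity)]
        nlinarith

theorem LinearMap.apply_self_nonneg_of_sqrt_eq_seminorm {V : Type*} [AddCommGroup V]
    [Module ℝ V] (B : V →ₗ[ℝ] V →ₗ[ℝ] ℝ) (p : Seminorm ℝ V) (hp : ∀ v, p v = √(B v v))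
    {w : V} (hw : 0 < B w w) (v : V) : 0 ≤ B v v := by
  by_contra! hv
  -- shifting `w` by a `p`-null vector preserves `B w w`; the shifts by `± v` then give `B v v = 0`
  have hpv : p v = 0 := by rw [hp, Real.sqrt_eq_zero'.2 hv.le]
  have hshift : ∀ u, p u = 0 → B (w + u) (w + u) = B w w := fun u hu => by
    have h := p.norm_sub_map_le_sub (w + u) w
    rw [add_sub_cancel_left, hu, norm_le_zero_iff, sub_eq_zero, hp, hp] at h
    have hnonneg : 0 ≤ B (w + u) (w + u) := by
      by_contra! hneg
      rw [Real.sqrt_eq_zero'.2 hneg.le] at h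
      exact (Real.sqrt_pos.2 hw).ne h
    exact (Real.sqrt_inj hnonneg hw.le).1 h
  have hplus := hshift v hpv
  have hminus := hshift (-v) (by rw [map_neg_eq_map, hpv])
  simp only [map_add, map_neg, LinearMap.add_apply, LinearMap.neg_apply] at hplus hminus
  linarith

theorem totallyBounded_of_forall_subset_add {G : Type*} [AddGroup G] [UniformSpace G]
    [IsUniformAddGroup G] {s : Set G}
    (h : ∀ U ∈ 𝓝 (0 : G), ∃ K : Set G, TotallyBounded K ∧ s ⊆ K + U) :
    TotallyBounded s := by
  rw [totallyBounded_iff_subset_finite_iUnion_nhds_zero]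
  intro U hU
  obtain ⟨W, hW, hWU⟩ := exists_nhds_zero_half hU
  obtain ⟨K, hK, hsK⟩ := h W hW
  obtain ⟨t, ht, hKt⟩ := totallyBounded_iff_subset_finite_iUnion_nhds_zero.1 hK W hW
  refine ⟨t, ht, fun x hx => ?_⟩
  obtain ⟨k, hk, u, hu, rfl⟩ := hsK hx
  obtain ⟨y, hy, w, hw, rfl⟩ := Set.mem_iUnion₂.1 (hKt hk)
  exact Set.mem_iUnion₂.2 ⟨y, hy, w + u, hWU w hw u hu, by simp [add_assoc]⟩

theorem WithSeminorms.hasBasis_zero_ball_of_monotone {𝕜 E ι : Type*} [NormedField 𝕜]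
    [AddCommGroup E] [Module 𝕜 E] [TopologicalSpace E] [SemilatticeSup ι] [OrderBot ι]
    {p : SeminormFamily 𝕜 E ι} (hp : WithSeminorms p) (hmono : Monotone p) :
    (𝓝 (0 : E)).HasBasis (fun ir : ι × ℝ => 0 < ir.2) fun ir => (p ir.1).ball 0 ir.2 :=
  hp.hasBasis_zero_ball.to_hasBasis
    (fun ⟨F, r⟩ hr => ⟨(F.sup id, r), hr,
      Seminorm.ball_antitone (Finset.sup_le fun i hi => hmono (Finset.le_sup (f := id) hi))⟩)
    (fun ⟨i, r⟩ hr => ⟨({i}, r), hr, by rw [Finset.sup_singleton]⟩)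

section Orthonormal

variable {V ι : Type*} [AddCommGroup V] [Module ℝ V] (B : V →ₗ[ℝ] V →ₗ[ℝ] ℝ)

def partialSum (e : ι → V) (F : Finset ι) : V →ₗ[ℝ] V :=
  ∑ k ∈ F, (B.flip (e k)).smulRight (e k)

theorem partialSum_apply (e : ι → V) (F : Finset ι) (v : V) :
    partialSum B e F v = ∑ k ∈ F, B v (e k) • e k := by
  simp [partialSum]

theorem totallyBounded_image_partialSum [UniformSpace V] [IsUniformAddGroup V]
    [ContinuousSMul ℝ V] (e : ι → V) (F : Finset ι) {s : Set V} {C : ℝ}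
    (hC : ∀ v ∈ s, ∀ k, |B v (e k)| ≤ C) :
    TotallyBounded (partialSum B e F '' s) := by
  refine ((isCompact_univ_pi fun _ => isCompact_Icc (a := -C) (b := C)).image
    (f := fun a : ι → ℝ => ∑ k ∈ F, a k • e k) (by fun_prop)).totallyBounded.subset ?_
  rintro _ ⟨v, hv, rfl⟩
  exact ⟨fun k => B v (e k), fun k _ => abs_le.1 (hC v hv k), (partialSum_apply B e F v).symm⟩

variable [DecidableEq ι] {e : ι → V}

theorem apply_sum_smul_of_orthonormal (he : ∀ i j, B (e i) (e j) = if i = j then 1 else 0)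
    (G : Finset ι) (d : ι → ℝ) (k : ι) :
    B (∑ i ∈ G, d i • e i) (e k) = if k ∈ G then d k else 0 := by
  simp [he, Finset.sum_ite_eq']

theorem apply_sum_smul_self_of_orthonormal (he : ∀ i j, B (e i) (e j) = if i = j then 1 else 0)
    (G : Finset ι) (d : ι → ℝ) :
    B (∑ i ∈ G, d i • e i) (∑ i ∈ G, d i • e i) = ∑ i ∈ G, d i ^ 2 := by
  simp only [map_sum (B _), map_smul, apply_sum_smul_of_orthonormal B he, smul_eq_mul]
  exact Finset.sum_congr rfl fun i hi => by simp [hi, sq]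

theorem sum_smul_sub_partialSum (he : ∀ i j, B (e i) (e j) = if i = j then 1 else 0)
    (F G : Finset ι) (d : ι → ℝ) :
    ∑ i ∈ G, d i • e i - partialSum B e F (∑ i ∈ G, d i • e i) = ∑ i ∈ G \ F, d i • e i := by
  simp only [partialSum_apply, apply_sum_smul_of_orthonormal B he, ite_smul, zero_smul,
    Finset.sum_ite_mem, Finset.inter_comm F G]
  rw [← Finset.sum_inter_add_sum_sdiff G F, add_sub_cancel_left]

theorem sum_sq_apply_le_of_orthonormal (hsymm : ∀ u v, B u v = B v u) (hpos : ∀ v, 0 ≤ B v v)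
    (he : ∀ i j, B (e i) (e j) = if i = j then 1 else 0) (F : Finset ι) (v : V) :
    ∑ k ∈ F, B v (e k) ^ 2 ≤ B v v := by
  set P := partialSum B e F v with hP
  have hPe : ∀ k ∈ F, B P (e k) = B v (e k) := fun k hk => by
    rw [hP, partialSum_apply, apply_sum_smul_of_orthonormal B he, if_pos hk]
  have hPx : ∀ x, B P x = ∑ k ∈ F, B v (e k) * B (e k) x := fun x => by
    simp [hP, partialSum_apply]
  have hPP : B P P = ∑ k ∈ F, B v (e k) ^ 2 := by
    rw [hPx]; exact Finset.sum_congr rfl fun k hk => by rw [hsymm (e k) P, hPe k hk, sq]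
  have hPv : B P v = ∑ k ∈ F, B v (e k) ^ 2 := by
    rw [hPx]; exact Finset.sum_congr rfl fun k _ => by rw [hsymm (e k), sq]
  have := hpos (v - P)
  simp only [map_sub, LinearMap.sub_apply, hsymm v P, hPP, hPv] at this
  linarith

theorem abs_apply_le_of_orthonormal (hsymm : ∀ u v, B u v = B v u) (hpos : ∀ v, 0 ≤ B v v)
    (he : ∀ i j, B (e i) (e j) = if i = j then 1 else 0)
    (p : Seminorm ℝ V) (hp : ∀ v, p v = √(B v v)) (v : V) (k : ι) :
    |B v (e k)| ≤ p v := by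
  rw [hp]
  exact Real.abs_le_sqrt (by simpa using sum_sq_apply_le_of_orthonormal B hsymm hpos he {k} v)

theorem seminorm_sub_partialSum_le_one_add_mul (hsymm : ∀ u v, B u v = B v u)
    (hpos : ∀ v, 0 ≤ B v v) (he : ∀ i j, B (e i) (e j) = if i = j then 1 else 0)
    (p q : Seminorm ℝ V) (hp : ∀ v, p v = √(B v v)) (hqp : ∀ v, q v ≤ p v) (F : Finset ι) (v : V) :
    q (v - partialSum B e F v) ≤ (1 + √(∑ k ∈ F, q (e k) ^ 2)) * p v :=
  calc q (v - partialSum B e F v) ≤ q v + q (partialSum B e F v) := map_sub_le_add q _ _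
    _ ≤ p v + √(∑ k ∈ F, B v (e k) ^ 2) * √(∑ k ∈ F, q (e k) ^ 2) := by
        rw [partialSum_apply]
        exact add_le_add (hqp v) (q.apply_sum_smul_le F _ e)
    _ ≤ p v + p v * √(∑ k ∈ F, q (e k) ^ 2) := by
        rw [hp]
        gcongr
        exact sum_sq_apply_le_of_orthonormal B hsymm hpos he F v
    _ = (1 + √(∑ k ∈ F, q (e k) ^ 2)) * p v := by ring

theorem seminorm_sum_smul_sub_partialSum_le (he : ∀ i j, B (e i) (e j) = if i = j then 1 else 0)
    (p q : Seminorm ℝ V) (hp : ∀ v, p v = √(B v v)) {F : Finset ι} {ε : ℝ} (hε : 0 ≤ ε)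
    (htail : ∀ G, Disjoint G F → ∑ k ∈ G, q (e k) ^ 2 ≤ ε ^ 2) (G : Finset ι) (d : ι → ℝ) :
    q (∑ i ∈ G, d i • e i - partialSum B e F (∑ i ∈ G, d i • e i)) ≤
      ε * p (∑ i ∈ G, d i • e i) := by
  rw [sum_smul_sub_partialSum B he, hp, apply_sum_smul_self_of_orthonormal B he, mul_comm]
  calc q (∑ i ∈ G \ F, d i • e i)
      ≤ √(∑ i ∈ G \ F, d i ^ 2) * √(∑ i ∈ G \ F, q (e i) ^ 2) := q.apply_sum_smul_le _ _ _
    _ ≤ √(∑ i ∈ G, d i ^ 2) * ε := by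
        gcongr
        · exact Finset.sdiff_subset
        · exact (Real.sqrt_le_left hε).2 (htail _ Finset.sdiff_disjoint)

theorem seminorm_sub_partialSum_le (hsymm : ∀ u v, B u v = B v u) (hpos : ∀ v, 0 ≤ B v v)
    (he : ∀ i j, B (e i) (e j) = if i = j then 1 else 0) (p q : Seminorm ℝ V)
    (hp : ∀ v, p v = √(B v v)) (hqp : ∀ v, q v ≤ p v)
    (htotal : ∀ v, ∀ δ > 0, ∃ (G : Finset ι) (d : ι → ℝ), p (v - ∑ i ∈ G, d i • e i) < δ)
    {F : Finset ι} {ε : ℝ} (hε : 0 ≤ ε)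
    (htail : ∀ G, Disjoint G F → ∑ k ∈ G, q (e k) ^ 2 ≤ ε ^ 2) (v : V) :
    q (v - partialSum B e F v) ≤ ε * p v := by
  have hr : ∀ v, q.comp (LinearMap.id - partialSum B e F) v = q (v - partialSum B e F v) :=
    fun _ => rfl
  rw [← hr]
  refine Seminorm.apply_le_mul_of_approx _ p (K := 1 + √(∑ k ∈ F, q (e k) ^ 2)) (by positivity)
    (fun v => hr v ▸ seminorm_sub_partialSum_le_one_add_mul B hsymm hpos he p q hp hqp F v) hε
    (fun v δ hδ => ?_) v
  obtain ⟨G, d, hvw⟩ := htotal v δ hδ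
  exact ⟨_, hvw, hr _ ▸ seminorm_sum_smul_sub_partialSum_le B he p q hp hε htail G d⟩

end Orthonormal

/-- If `V` is a nuclear space — a complete countably-Hilbert space (the increasing norms
`p n` come from inner products `Bf n`) such that for every `n` there is `m ≥ n` for which
the inclusion `V_m ↪ V_n` is Hilbert–Schmidt (there is an orthonormal basis `e` of `V_m`,
i.e. an orthonormal total family in the `m`-th inner product, with `Σ_k ‖e k‖_n² < ∞`) —
then every bounded subset of `V` is relatively compact; that is, `V` is perfect. -/
theorem stmt19 {V : Type*} [AddCommGroup V] [Module ℝ V] [UniformSpace V]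
    [IsUniformAddGroup V] [CompleteSpace V]
    (p : SeminormFamily ℝ V ℕ) (hp : WithSeminorms p) (hmono : Monotone p)
    (Bf : ℕ → (V →ₗ[ℝ] V →ₗ[ℝ] ℝ))
    (hBsymm : ∀ n u v, Bf n u v = Bf n v u)
    (hBp : ∀ n v, p n v = Real.sqrt (Bf n v v))
    (hnuclear : ∀ n : ℕ, ∃ m ≥ n, ∃ e : ℕ → V,
      (∀ i j, Bf m (e i) (e j) = if i = j then (1 : ℝ) else 0) ∧
      (∀ v : V, ∀ ε > (0 : ℝ), ∃ (s : Finset ℕ) (c : ℕ → ℝ),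
        p m (v - ∑ i ∈ s, c i • e i) < ε) ∧
      Summable (fun k => (p n (e k)) ^ 2)) :
    ∀ s : Set V, Bornology.IsVonNBounded ℝ s → IsCompact (closure s) := by
  intro s hs
  have := hp.continuousSMul
  refine (totallyBounded_of_forall_subset_add fun U hU => ?_).closure.isCompact_of_isClosed
    isClosed_closure
  obtain ⟨⟨n, r⟩, hr, hrU⟩ := (hp.hasBasis_zero_ball_of_monotone hmono).mem_iff.1 hU
  obtain ⟨m, hmn, e, he, htotal, hsum⟩ := hnuclear n
  have hpos := (Bf m).apply_self_nonneg_of_sqrt_eq_seminorm (p m) (hBp m) (w := e 0)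
    (by simp [he])
  obtain ⟨C, hC, hsC⟩ := hp.isVonNBounded_iff_seminorm_bounded.1 hs m
  obtain ⟨F, hF⟩ := hsum.vanishing (Iio_mem_nhds (by positivity : (0 : ℝ) < (r / (2 * C)) ^ 2))
  refine ⟨partialSum (Bf m) e F '' s, ?_, fun v hv => ?_⟩
  · exact totallyBounded_image_partialSum _ e F fun v hv k =>
      (abs_apply_le_of_orthonormal _ (hBsymm m) hpos he _ (hBp m) v k).trans (hsC v hv).le
  refine ⟨_, Set.mem_image_of_mem _ hv, v - partialSum (Bf m) e F v, hrU ?_, add_sub_cancel _ _⟩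
  rw [Seminorm.mem_ball_zero]
  calc p n (v - partialSum (Bf m) e F v) ≤ r / (2 * C) * p m v :=
        seminorm_sub_partialSum_le _ (hBsymm m) hpos he _ _ (hBp m) (fun v => hmono hmn v)
          htotal (by positivity) (fun G hG => (hF G hG).le) v
    _ ≤ r / (2 * C) * C := by gcongr; exact (hsC v hv).le
    _ < r := by field_simp; linarith
end
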